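/- Let p and q be positive probability mass functions on a finite set V and s ≥ 0. Define p_s(w) = p(w)·(p(w)/q(w))^s / Z with Z = Σ_v p(v)·(p(v)/q(v))^s. Then for s = 0, p_s = p, and as s → ∞, p_s concentrates on the argmax set of p(w)/q(w): specifically, if w* uniquely maximizes p(w)/q(w) over V, then p_s(w*) → 1 as s → ∞. -/

import Mathlib

/-!
Dividing numerator and denominator of `p_s(w₀)` by `(p w₀ / q w₀) ^ s` turns the
denominator into `∑ v, p v * (r v / r w₀) ^ s` with `r = p / q`; every base `r v / r w₀`
with `v ≠ w₀` lies in `[0, 1)`, so these terms vanish as `s → ∞` and the denominator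
tends to the numerator `p w₀`.
-/

open Filter Topology

section

variable {ι : Type*}

theorem Finset.sum_mul_div_rpow (t : Finset ι) (a r : ι → ℝ) (hr : ∀ i, 0 ≤ r i) {c : ℝ}
    (hc : 0 < c) (s : ℝ) : ∑ i ∈ t, a i * (r i / c) ^ s = (∑ i ∈ t, a i * r i ^ s) / c ^ s := by
  simp only [Real.div_rpow (hr _) hc.le, Finset.sum_div, mul_div_assoc]

theorem tendsto_sum_mul_div_rpow_atTop [Fintype ι] [DecidableEq ι] (a r : ι → ℝ)
    (hr : ∀ i, 0 ≤ r i) (i₀ : ι) (hr₀ : 0 < r i₀) (hmax : ∀ i, i ≠ i₀ → r i < r i₀) :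
    Tendsto (fun s : ℝ => ∑ i, a i * (r i / r i₀) ^ s) atTop (𝓝 (a i₀)) := by
  rw [← Fintype.sum_ite_eq' i₀ a]
  refine tendsto_finsetSum _ fun i _ => ?_
  split_ifs with hi
  · subst hi
    simp only [div_self hr₀.ne', Real.one_rpow, mul_one, tendsto_const_nhds]
  · have hbase : r i / r i₀ < 1 := (div_lt_one hr₀).2 (hmax i hi)
    have hbase₀ : 0 ≤ r i / r i₀ := div_nonneg (hr i) hr₀.le
    simpa using (tendsto_rpow_atTop_of_base_lt_one _ (by linarith) hbase).const_mul (a i)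

theorem tendsto_mul_rpow_div_sum_atTop [Fintype ι] (a r : ι → ℝ) (hr : ∀ i, 0 ≤ r i) (i₀ : ι)
    (ha : a i₀ ≠ 0) (hr₀ : 0 < r i₀) (hmax : ∀ i, i ≠ i₀ → r i < r i₀) :
    Tendsto (fun s : ℝ => a i₀ * r i₀ ^ s / ∑ i, a i * r i ^ s) atTop (𝓝 1) := by
  classical
  have hrescale : ∀ s : ℝ, a i₀ * r i₀ ^ s / ∑ i, a i * r i ^ s
      = a i₀ / ∑ i, a i * (r i / r i₀) ^ s := fun s => by
    rw [Finset.sum_mul_div_rpow _ a r hr hr₀, div_div_eq_mul_div]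
  simp only [hrescale]
  rw [← div_self ha]
  exact tendsto_const_nhds.div (tendsto_sum_mul_div_rpow_atTop a r hr i₀ hr₀ hmax) ha

end

theorem stmt_8_general {V : Type*} [Fintype V]
    (p q : V → ℝ) (hp : ∀ w, 0 < p w) (hq : ∀ w, 0 < q w)
    (hpsum : ∑ w, p w = 1)
    (ps : ℝ → V → ℝ)
    (hdef : ∀ s w, ps s w
      = p w * (p w / q w) ^ s / ∑ v, p v * (p v / q v) ^ s) :
    (∀ w, ps 0 w = p w) ∧
    ∀ w₀ : V, (∀ w, w ≠ w₀ → p w / q w < p w₀ / q w₀) →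
      Filter.Tendsto (fun s => ps s w₀) Filter.atTop (nhds 1) := by
  refine ⟨fun w => by simp [hdef, hpsum], fun w₀ hmax => ?_⟩
  simp only [hdef]
  exact tendsto_mul_rpow_div_sum_atTop p (fun w => p w / q w)
    (fun w => (div_pos (hp w) (hq w)).le) w₀ (hp w₀).ne' (div_pos (hp w₀) (hq w₀)) hmax

/-- For positive pmfs `p, q` on a finite set and the CFG distribution
`p_s(w) ∝ p(w)·(p(w)/q(w))^s`: at `s = 0` we recover `p`, and if `w₀` uniquely maximizes
`p(w)/q(w)` then `p_s(w₀) → 1` as `s → ∞`. -/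
theorem stmt_8 {V : Type*} [Fintype V] [Nonempty V]
    (p q : V → ℝ) (hp : ∀ w, 0 < p w) (hq : ∀ w, 0 < q w)
    (hpsum : ∑ w, p w = 1) (hqsum : ∑ w, q w = 1)
    (ps : ℝ → V → ℝ)
    (hdef : ∀ s w, ps s w
      = p w * (p w / q w) ^ s / ∑ v, p v * (p v / q v) ^ s) :
    (∀ w, ps 0 w = p w) ∧
    ∀ w₀ : V, (∀ w, w ≠ w₀ → p w / q w < p w₀ / q w₀) →
      Filter.Tendsto (fun s => ps s w₀) Filter.atTop (nhds 1) :=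
  stmt_8_general p q hp hq hpsum ps hdef
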